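/- arXiv:math/0501515 — 2 statements merged into one kernel-verified Lean document; each statement's English description precedes it below -/
import Mathlib

section
/- Let R be a filtered λ-ring structure on ℤ[x]/(x⁴) such that the linear coefficient of ψ_2^R(x) is 0. Then ψ_p^R(x) = c_p x² + d_p x³ for some integers c_p, d_p for every prime p (i.e., every ψ_p^R(x) has zero linear coefficient). Conversely, any family of polynomials ψ_p(x) = c_p x² + d_p x³ satisfying ψ_p(x) ≡ x^p (mod p) for all primes p defines a filtered λ-ring structure on ℤ[x]/(x⁴). Two such structures S((c_p), (d_p)) and S((c̄_p), (d̄_p)) are isomorphic if and only if (i) there exists u ∈ {1, −1} with c_p = u·c̄_p for all primes p, and (ii) there exists an integer α such that d̄_p = d_p + 2c_p·α for all primes p. -/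
open Polynomial

noncomputable section

/-- The truncated polynomial ring `ℤ[x]/(xⁿ)`. -/
abbrev TP (n : ℕ) : Type := Polynomial ℤ ⧸ Ideal.span {(X : Polynomial ℤ) ^ n}

/-- The class of `x` in `ℤ[x]/(xⁿ)`. -/
def xx (n : ℕ) : TP n := Ideal.Quotient.mk _ (X : Polynomial ℤ)

/-- A filtered λ-ring structure on `ℤ[x]/(xⁿ)`, presented (via Wilkerson's theorem) as a
family of Adams operations `ψ p`, indexed by the primes `p`: each `ψ p` is a ring
endomorphism preserving the filtration ideal `(x)`, they pairwise commute, and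
`ψ p r ≡ r ^ p (mod p)`. -/
structure AdamsFamily (n : ℕ) : Type where
  ψ : Nat.Primes → (TP n →+* TP n)
  maps_ideal : ∀ (p : Nat.Primes), ∀ a ∈ Ideal.span {xx n}, ψ p a ∈ Ideal.span {xx n}
  comm : ∀ p q : Nat.Primes, (ψ p).comp (ψ q) = (ψ q).comp (ψ p)
  frob : ∀ (p : Nat.Primes) (a : TP n),
    ψ p a - a ^ (p : ℕ) ∈ Ideal.span {((p : ℕ) : TP n)}

/-- Isomorphism of filtered λ-ring structures on `ℤ[x]/(xⁿ)`: a filtration-preserving ring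
automorphism intertwining the Adams operations. -/
def AdamsIso {n : ℕ} (R S : AdamsFamily n) : Prop :=
  ∃ σ : TP n ≃+* TP n,
    (Ideal.span {xx n}).map σ.toRingHom = Ideal.span {xx n} ∧
    ∀ p : Nat.Primes, σ.toRingHom.comp (R.ψ p) = (S.ψ p).comp σ.toRingHom

/-- The prime 2 as an element of `Nat.Primes`. -/
def P2 : Nat.Primes := ⟨2, Nat.prime_two⟩

/-- The prime 3 as an element of `Nat.Primes`. -/
def P3 : Nat.Primes := ⟨3, Nat.prime_three⟩


/-!
Every element of `ℤ[x]/(x⁴)` is uniquely `a + b x + c x² + d x³`, and a ring endomorphism is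
determined by the image `u x + v x² + w x³` of `x`, which can be any element of `(x)`; composing
such substitutions is explicit on coefficients. If `ψ₂ x = e x² + ⋯` then `e` is odd (from
`ψ₂ x ≡ x² mod 2`), and comparing `x²`-coefficients in `ψ₂ ∘ ψ_p = ψ_p ∘ ψ₂` gives
`e b = e b²` for the linear coefficient `b` of `ψ_p x`; since `p ∣ b`, `b = 0`. Conversely any
family `x ↦ c_p x² + d_p x³` pairwise composes to `0`, hence commutes, and the Frobenius
congruence need only be checked on the generator `x`. An isomorphism `σ` has `σ x = u x + v x² + ⋯`
with `u = ±1`; conjugating `x ↦ c x² + d x³` by it gives `x ↦ u c x² + (d + 2 c v) x³`.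
-/

namespace TP

theorem xx_pow_self (n : ℕ) : xx n ^ n = 0 := by
  rw [xx, ← map_pow, Ideal.Quotient.eq_zero_iff_mem]
  exact Ideal.subset_span rfl

theorem ringHom_ext {n : ℕ} {A : Type*} [Semiring A] {f g : TP n →+* A}
    (h : f (xx n) = g (xx n)) : f = g :=
  Ideal.Quotient.ringHom_ext (Polynomial.ringHom_ext' (RingHom.ext_int _ _) h)

theorem ringHom_ext_iff {n : ℕ} {A : Type*} [Semiring A] {f g : TP n →+* A} :
    f = g ↔ f (xx n) = g (xx n) :=
  ⟨fun h => h ▸ rfl, ringHom_ext⟩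

def lift {n : ℕ} {A : Type*} [CommRing A] (t : A) (ht : t ^ n = 0) : TP n →+* A :=
  Ideal.Quotient.lift _ (eval₂RingHom (Int.castRingHom A) t) fun g hg => by
    obtain ⟨r, rfl⟩ := Ideal.mem_span_singleton'.mp hg
    simp [ht]

@[simp]
theorem lift_xx {n : ℕ} {A : Type*} [CommRing A] (t : A) (ht : t ^ n = 0) :
    lift t ht (xx n) = t := by
  simp [lift, xx]

theorem sub_pow_mem_span_of_xx {n p : ℕ} [Fact p.Prime] (f : TP n →+* TP n)
    (hx : f (xx n) - xx n ^ p ∈ Ideal.span {(p : TP n)}) (a : TP n) :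
    f a - a ^ p ∈ Ideal.span {(p : TP n)} := by
  by_cases hp : IsUnit (p : TP n)
  · simp [Ideal.span_singleton_eq_top.mpr hp]
  have := CharP.quotient (TP n) p hp
  let π := Ideal.Quotient.mk (Ideal.span {(p : TP n)})
  have hπ : π.comp f = (frobenius (TP n ⧸ Ideal.span {(p : TP n)}) p).comp π := by
    rw [ringHom_ext_iff, RingHom.comp_apply, RingHom.comp_apply, frobenius_def, ← map_pow,
      Ideal.Quotient.eq]
    exact hx
  have ha := congr($hπ a)
  rwa [RingHom.comp_apply, RingHom.comp_apply, frobenius_def, ← map_pow, Ideal.Quotient.eq] at ha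

end TP

def AdamsFamily.ofGenerator {n : ℕ} (ψ : Nat.Primes → TP n →+* TP n)
    (mem : ∀ p, ψ p (xx n) ∈ Ideal.span {xx n})
    (comm : ∀ p q, ψ p (ψ q (xx n)) = ψ q (ψ p (xx n)))
    (frob : ∀ p : Nat.Primes, ψ p (xx n) - xx n ^ (p : ℕ) ∈ Ideal.span {((p : ℕ) : TP n)}) :
    AdamsFamily n where
  ψ := ψ
  maps_ideal p a ha := by
    obtain ⟨s, rfl⟩ := Ideal.mem_span_singleton'.mp ha
    rw [map_mul]
    exact Ideal.mul_mem_left _ _ (mem p)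
  comm p q := TP.ringHom_ext (comm p q)
  frob p := have : Fact (p : ℕ).Prime := ⟨p.2⟩; TP.sub_pow_mem_span_of_xx (ψ p) (frob p)

namespace TP

def ofCoeffs (a b c d : ℤ) : TP 4 := a + b * xx 4 + c * xx 4 ^ 2 + d * xx 4 ^ 3

theorem xx_eq_ofCoeffs : xx 4 = ofCoeffs 0 1 0 0 := by
  simp [ofCoeffs]

theorem xx_sq_eq_ofCoeffs : xx 4 ^ 2 = ofCoeffs 0 0 1 0 := by
  simp [ofCoeffs]

theorem ofCoeffs_zero_zero (c d : ℤ) :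
    ofCoeffs 0 0 c d = (c : TP 4) * xx 4 ^ 2 + (d : TP 4) * xx 4 ^ 3 := by
  simp [ofCoeffs]

theorem ofCoeffs_eq_mk (a b c d : ℤ) :
    ofCoeffs a b c d =
      Ideal.Quotient.mk (Ideal.span {(X : ℤ[X]) ^ 4})
        (C a + C b * X + C c * X ^ 2 + C d * X ^ 3) := by
  simp [ofCoeffs, xx]

theorem ofCoeffs_surjective (t : TP 4) : ∃ a b c d : ℤ, ofCoeffs a b c d = t := by
  obtain ⟨g, rfl⟩ := Ideal.Quotient.mk_surjective t
  refine ⟨g.coeff 0, g.coeff 1, g.coeff 2, g.coeff 3, ?_⟩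
  rw [ofCoeffs_eq_mk, Ideal.Quotient.eq, Ideal.mem_span_singleton, X_pow_dvd_iff]
  intro i hi
  interval_cases i <;>
    simp only [coeff_sub, coeff_add, coeff_C_mul, coeff_X_pow, coeff_X, coeff_C] <;> norm_num

theorem ofCoeffs_inj {a b c d a' b' c' d' : ℤ} :
    ofCoeffs a b c d = ofCoeffs a' b' c' d' ↔ a = a' ∧ b = b' ∧ c = c' ∧ d = d' := by
  refine ⟨fun h => ?_, by rintro ⟨rfl, rfl, rfl, rfl⟩; rfl⟩
  rw [ofCoeffs_eq_mk, ofCoeffs_eq_mk, Ideal.Quotient.eq, Ideal.mem_span_singleton,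
    X_pow_dvd_iff] at h
  simp only [coeff_sub, coeff_add, coeff_C_mul, coeff_X_pow, coeff_X, coeff_C, sub_eq_zero] at h
  refine ⟨?_, ?_, ?_, ?_⟩
  · simpa using h 0 (by norm_num)
  · simpa using h 1 (by norm_num)
  · simpa using h 2 (by norm_num)
  · simpa using h 3 (by norm_num)

theorem xx_four_pow_eq_zero {k : ℕ} (hk : 4 ≤ k) : xx 4 ^ k = 0 :=
  pow_eq_zero_of_le hk (xx_pow_self 4)

theorem ofCoeffs_mul (a b c d a' b' c' d' : ℤ) :
    ofCoeffs a b c d * ofCoeffs a' b' c' d' =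
      ofCoeffs (a * a') (a * b' + b * a') (a * c' + b * b' + c * a')
        (a * d' + b * c' + c * b' + d * a') := by
  simp only [ofCoeffs]
  push_cast
  ring_nf
  simp (disch := norm_num) only [xx_four_pow_eq_zero]
  ring

theorem map_ofCoeffs (f : TP 4 →+* TP 4) {u v w : ℤ} (hf : f (xx 4) = ofCoeffs 0 u v w)
    (a b c d : ℤ) :
    f (ofCoeffs a b c d) =
      ofCoeffs a (b * u) (b * v + c * u ^ 2) (b * w + 2 * c * u * v + d * u ^ 3) := by
  simp only [ofCoeffs, map_add, map_mul, map_pow, map_intCast, hf]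
  push_cast
  ring_nf
  simp (disch := norm_num) only [xx_four_pow_eq_zero]
  ring

theorem ofCoeffs_sub (a b c d a' b' c' d' : ℤ) :
    ofCoeffs a b c d - ofCoeffs a' b' c' d' = ofCoeffs (a - a') (b - b') (c - c') (d - d') := by
  simp only [ofCoeffs]
  push_cast
  ring

theorem ofCoeffs_mul_xx (a b c d : ℤ) : ofCoeffs a b c d * xx 4 = ofCoeffs 0 a b c := by
  simp only [ofCoeffs]
  push_cast
  linear_combination (d : TP 4) * xx_pow_self 4

theorem ofCoeffs_mul_xx_sq (a b c d : ℤ) : ofCoeffs a b c d * xx 4 ^ 2 = ofCoeffs 0 0 a b := by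
  simp only [ofCoeffs]
  push_cast
  linear_combination ((c : TP 4) + d * xx 4) * xx_pow_self 4

theorem ofCoeffs_mul_intCast (a b c d m : ℤ) :
    ofCoeffs a b c d * m = ofCoeffs (a * m) (b * m) (c * m) (d * m) := by
  simp only [ofCoeffs]
  push_cast
  ring

theorem ofCoeffs_zero_pow_four (b c d : ℤ) : ofCoeffs 0 b c d ^ 4 = 0 := by
  rw [← ofCoeffs_mul_xx b c d 0, mul_pow, xx_pow_self, mul_zero]

theorem mem_span_xx_iff {a b c d : ℤ} : ofCoeffs a b c d ∈ Ideal.span {xx 4} ↔ a = 0 := by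
  refine ⟨fun h => ?_, fun h => ?_⟩
  · obtain ⟨s, hs⟩ := Ideal.mem_span_singleton'.mp h
    obtain ⟨s₀, s₁, s₂, s₃, rfl⟩ := ofCoeffs_surjective s
    rw [ofCoeffs_mul_xx, ofCoeffs_inj] at hs
    exact hs.1.symm
  · exact Ideal.mem_span_singleton'.mpr ⟨ofCoeffs b c d 0, by rw [ofCoeffs_mul_xx, h]⟩

theorem mem_span_xx_sq_iff {a b c d : ℤ} :
    ofCoeffs a b c d ∈ Ideal.span {xx 4 ^ 2} ↔ a = 0 ∧ b = 0 := by
  refine ⟨fun h => ?_, fun h => ?_⟩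
  · obtain ⟨s, hs⟩ := Ideal.mem_span_singleton'.mp h
    obtain ⟨s₀, s₁, s₂, s₃, rfl⟩ := ofCoeffs_surjective s
    rw [ofCoeffs_mul_xx_sq, ofCoeffs_inj] at hs
    exact ⟨hs.1.symm, hs.2.1.symm⟩
  · exact Ideal.mem_span_singleton'.mpr ⟨ofCoeffs c d 0 0, by rw [ofCoeffs_mul_xx_sq, h.1, h.2]⟩

theorem mem_span_natCast_iff {a b c d : ℤ} {m : ℕ} :
    ofCoeffs a b c d ∈ Ideal.span {(m : TP 4)} ↔
      (m : ℤ) ∣ a ∧ (m : ℤ) ∣ b ∧ (m : ℤ) ∣ c ∧ (m : ℤ) ∣ d := by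
  rw [← Int.cast_natCast]
  refine ⟨fun h => ?_, fun ⟨⟨a', ha⟩, ⟨b', hb⟩, ⟨c', hc⟩, ⟨d', hd⟩⟩ => ?_⟩
  · obtain ⟨s, hs⟩ := Ideal.mem_span_singleton'.mp h
    obtain ⟨s₀, s₁, s₂, s₃, rfl⟩ := ofCoeffs_surjective s
    rw [ofCoeffs_mul_intCast, ofCoeffs_inj] at hs
    obtain ⟨rfl, rfl, rfl, rfl⟩ := hs
    exact ⟨dvd_mul_left .., dvd_mul_left .., dvd_mul_left .., dvd_mul_left ..⟩
  · refine Ideal.mem_span_singleton'.mpr ⟨ofCoeffs a' b' c' d', ?_⟩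
    rw [ofCoeffs_mul_intCast, ha, hb, hc, hd]
    simp only [mul_comm]

theorem exists_ofCoeffs_of_mem_span_xx {t : TP 4} (ht : t ∈ Ideal.span {xx 4}) :
    ∃ b c d : ℤ, t = ofCoeffs 0 b c d := by
  obtain ⟨a, b, c, d, rfl⟩ := ofCoeffs_surjective t
  obtain rfl := mem_span_xx_iff.mp ht
  exact ⟨b, c, d, rfl⟩

theorem exists_ofCoeffs_of_mem_span_xx_sq {t : TP 4} (ht : t ∈ Ideal.span {xx 4 ^ 2}) :
    ∃ c d : ℤ, t = ofCoeffs 0 0 c d := by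
  obtain ⟨a, b, c, d, rfl⟩ := ofCoeffs_surjective t
  obtain ⟨rfl, rfl⟩ := mem_span_xx_sq_iff.mp ht
  exact ⟨c, d, rfl⟩

theorem span_ofCoeffs_eq_span_xx_iff {u v w : ℤ} :
    Ideal.span {ofCoeffs 0 u v w} = Ideal.span {xx 4} ↔ IsUnit u := by
  rw [← ofCoeffs_mul_xx, mul_comm]
  refine ⟨fun h => ?_, fun hu => Ideal.span_singleton_mul_right_unit ?_ _⟩
  · have hx : xx 4 ∈ Ideal.span {xx 4 * ofCoeffs u v w 0} := h ▸ Ideal.mem_span_singleton_self _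
    obtain ⟨s, hs⟩ := Ideal.mem_span_singleton'.mp hx
    obtain ⟨s₀, s₁, s₂, s₃, rfl⟩ := ofCoeffs_surjective s
    rw [mul_comm (xx 4), ofCoeffs_mul_xx, ofCoeffs_mul, xx_eq_ofCoeffs, ofCoeffs_inj] at hs
    exact IsUnit.of_mul_eq_one_right s₀ (by linarith [hs.2.1])
  · have hnil : IsNilpotent (ofCoeffs 0 v w 0) := ⟨4, ofCoeffs_zero_pow_four v w 0⟩
    convert hnil.isUnit_add_left_of_commute (hu.map (Int.castRingHom (TP 4))) (Commute.all _ _)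
      using 1
    simp [ofCoeffs, add_assoc]

def subst (u v w : ℤ) : TP 4 →+* TP 4 := lift (ofCoeffs 0 u v w) (ofCoeffs_zero_pow_four u v w)

@[simp]
theorem subst_xx (u v w : ℤ) : subst u v w (xx 4) = ofCoeffs 0 u v w := lift_xx ..

theorem subst_one_zero_zero : subst 1 0 0 = RingHom.id (TP 4) :=
  ringHom_ext (by rw [subst_xx, RingHom.id_apply, xx_eq_ofCoeffs])

theorem subst_comp_subst (u v w u' v' w' : ℤ) :
    (subst u v w).comp (subst u' v' w') =
      subst (u' * u) (u' * v + v' * u ^ 2) (u' * w + 2 * v' * u * v + w' * u ^ 3) := by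
  rw [ringHom_ext_iff, RingHom.comp_apply, subst_xx, subst_xx, map_ofCoeffs _ (subst_xx u v w)]

theorem subst_zero_ofCoeffs_zero_zero (v w c d : ℤ) : subst 0 v w (ofCoeffs 0 0 c d) = 0 := by
  rw [map_ofCoeffs _ (subst_xx 0 v w)]
  simp [ofCoeffs]

/-- The inverse is the series reversion of `u x + v x² + w x³`, simplified using `u⁻¹ = u`. -/
def substEquiv (u v w : ℤ) (hu : u * u = 1) : TP 4 ≃+* TP 4 :=
  RingEquiv.ofRingHom (subst u v w) (subst u (-(v * u)) ((2 * v ^ 2 - u * w) * u))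
    (by
      rw [subst_comp_subst, ← subst_one_zero_zero]
      congr 1
      · linear_combination (-(u * v)) * hu
      · linear_combination (2 * v ^ 2 * u ^ 2 - u * w * (u ^ 2 + 1)) * hu)
    (by
      rw [subst_comp_subst, ← subst_one_zero_zero]
      congr 1 <;> ring)

@[simp]
theorem substEquiv_xx (u v w : ℤ) (hu : u * u = 1) :
    substEquiv u v w hu (xx 4) = ofCoeffs 0 u v w :=
  subst_xx u v w

theorem comp_eq_comp_iff {σ ψ ψ' : TP 4 →+* TP 4} {u v w c d c' d' : ℤ}
    (hσ : σ (xx 4) = ofCoeffs 0 u v w) (hψ : ψ (xx 4) = ofCoeffs 0 0 c d)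
    (hψ' : ψ' (xx 4) = ofCoeffs 0 0 c' d') :
    σ.comp ψ = ψ'.comp σ ↔ c * u ^ 2 = u * c' ∧ 2 * c * u * v + d * u ^ 3 = u * d' := by
  rw [ringHom_ext_iff, RingHom.comp_apply, RingHom.comp_apply, hψ, hσ, map_ofCoeffs _ hσ,
    map_ofCoeffs _ hψ', ofCoeffs_inj]
  constructor
  · rintro ⟨-, -, h₂, h₃⟩
    exact ⟨by linear_combination h₂, by linear_combination h₃⟩
  · rintro ⟨h₂, h₃⟩
    exact ⟨rfl, by ring, by linear_combination h₂, by linear_combination h₃⟩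

end TP

namespace AdamsFamily

open TP

theorem exists_psi_xx_eq (R : AdamsFamily 4) (p : Nat.Primes) :
    ∃ b c d : ℤ, R.ψ p (xx 4) = ofCoeffs 0 b c d :=
  exists_ofCoeffs_of_mem_span_xx (R.maps_ideal p _ (Ideal.mem_span_singleton_self _))

theorem natCast_dvd_of_psi_xx_eq (R : AdamsFamily 4) (p : Nat.Primes) {b c d : ℤ}
    (h : R.ψ p (xx 4) = ofCoeffs 0 b c d) : ((p : ℕ) : ℤ) ∣ b := by
  obtain ⟨e, f, he⟩ := exists_ofCoeffs_of_mem_span_xx_sq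
    (Ideal.mem_span_singleton.mpr (pow_dvd_pow (xx 4) p.2.two_le))
  have := R.frob p (xx 4)
  rw [h, he, ofCoeffs_sub, mem_span_natCast_iff] at this
  simpa using this.2.1

theorem odd_of_psi_two_xx_eq (R : AdamsFamily 4) {c d : ℤ}
    (h : R.ψ P2 (xx 4) = ofCoeffs 0 0 c d) : Odd c := by
  have := R.frob P2 (xx 4)
  rw [h, show ((P2 : ℕ)) = 2 from rfl, xx_sq_eq_ofCoeffs, ofCoeffs_sub,
    mem_span_natCast_iff] at this
  exact Int.odd_iff.mpr (by omega)

theorem psi_xx_mem_span_xx_sq (R : AdamsFamily 4)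
    (h2 : R.ψ P2 (xx 4) ∈ Ideal.span {xx 4 ^ 2}) (p : Nat.Primes) :
    R.ψ p (xx 4) ∈ Ideal.span {xx 4 ^ 2} := by
  obtain ⟨e, f, he⟩ := exists_ofCoeffs_of_mem_span_xx_sq h2
  obtain ⟨b, c, d, hb⟩ := R.exists_psi_xx_eq p
  have hcomm := congr($(R.comm P2 p) (xx 4))
  rw [RingHom.comp_apply, RingHom.comp_apply, hb, he, map_ofCoeffs _ he, map_ofCoeffs _ hb,
    ofCoeffs_inj] at hcomm
  have he0 : e ≠ 0 := by
    have := Int.odd_iff.mp (R.odd_of_psi_two_xx_eq he)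
    omega
  -- `x²`-coefficients of `ψ₂ (ψ_p x) = ψ_p (ψ₂ x)`: `b e = e b²`
  have hb01 : b * (b - 1) = 0 :=
    (mul_eq_zero.mp (by linear_combination -hcomm.2.2.1)).resolve_left he0
  have hb0 : b = 0 := by
    rcases mul_eq_zero.mp hb01 with hb0 | hb1
    · exact hb0
    · have hp := R.natCast_dvd_of_psi_xx_eq p hb
      rw [sub_eq_zero.mp hb1, ← Nat.cast_one, Int.natCast_dvd_natCast] at hp
      exact absurd (Nat.dvd_one.mp hp) p.2.ne_one
  rw [hb, hb0]
  exact mem_span_xx_sq_iff.mpr ⟨rfl, rfl⟩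

theorem exists_of_sub_pow_mem (c d : Nat.Primes → ℤ)
    (h : ∀ p : Nat.Primes,
      ofCoeffs 0 0 (c p) (d p) - xx 4 ^ (p : ℕ) ∈ Ideal.span {((p : ℕ) : TP 4)}) :
    ∃ S : AdamsFamily 4, ∀ p, S.ψ p (xx 4) = ofCoeffs 0 0 (c p) (d p) :=
  ⟨ofGenerator (fun p => subst 0 (c p) (d p)) (fun p => by simp [mem_span_xx_iff])
    (fun p q => by simp [subst_zero_ofCoeffs_zero_zero]) (by simpa using h), fun p => subst_xx ..⟩

end AdamsFamily

theorem adamsIso_iff_of_psi_xx_eq {S S' : AdamsFamily 4} {c d c' d' : Nat.Primes → ℤ}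
    (hS : ∀ p, S.ψ p (xx 4) = TP.ofCoeffs 0 0 (c p) (d p))
    (hS' : ∀ p, S'.ψ p (xx 4) = TP.ofCoeffs 0 0 (c' p) (d' p)) :
    AdamsIso S S' ↔
      (∃ u : ℤ, (u = 1 ∨ u = -1) ∧ ∀ p, c p = u * c' p) ∧
        ∃ α : ℤ, ∀ p, d' p = d p + 2 * c p * α := by
  constructor
  · rintro ⟨σ, hσI, hσψ⟩
    have hσx : σ.toRingHom (xx 4) ∈ Ideal.span {xx 4} :=
      hσI ▸ Ideal.mem_map_of_mem _ (Ideal.mem_span_singleton_self _)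
    obtain ⟨u, v, w, hσ⟩ := TP.exists_ofCoeffs_of_mem_span_xx hσx
    rw [Ideal.map_span, Set.image_singleton, hσ, TP.span_ofCoeffs_eq_span_xx_iff,
      Int.isUnit_iff] at hσI
    have key p := (TP.comp_eq_comp_iff hσ (hS p) (hS' p)).mp (hσψ p)
    refine ⟨⟨u, hσI, fun p => ?_⟩, v, fun p => ?_⟩ <;> obtain ⟨h₂, h₃⟩ := key p <;>
      rcases hσI with rfl | rfl <;> linarith
  · rintro ⟨⟨u, hu, hc⟩, α, hd⟩
    have hu2 : u * u = 1 := by rcases hu with rfl | rfl <;> norm_num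
    refine ⟨TP.substEquiv u α 0 hu2, ?_, fun p => ?_⟩
    · rw [Ideal.map_span, Set.image_singleton, RingEquiv.toRingHom_eq_coe,
        RingEquiv.coe_toRingHom, TP.substEquiv_xx]
      exact TP.span_ofCoeffs_eq_span_xx_iff.mpr (Int.isUnit_iff.mpr hu)
    · refine (TP.comp_eq_comp_iff (TP.substEquiv_xx u α 0 hu2) (hS p) (hS' p)).mpr ?_
      rw [hd p, hc p]
      rcases hu with rfl | rfl <;> constructor <;> ring

theorem stmt12 :
    (∀ R : AdamsFamily 4, R.ψ P2 (xx 4) ∈ Ideal.span {xx 4 ^ 2} →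
      ∀ p : Nat.Primes, ∃ c d : ℤ,
        R.ψ p (xx 4) = (c : TP 4) * xx 4 ^ 2 + (d : TP 4) * xx 4 ^ 3) ∧
    (∀ c d : Nat.Primes → ℤ,
      (∀ p : Nat.Primes,
        (c p : TP 4) * xx 4 ^ 2 + (d p : TP 4) * xx 4 ^ 3 - xx 4 ^ (p : ℕ)
          ∈ Ideal.span {((p : ℕ) : TP 4)}) →
      ∃ S : AdamsFamily 4, ∀ p : Nat.Primes,
        S.ψ p (xx 4) = (c p : TP 4) * xx 4 ^ 2 + (d p : TP 4) * xx 4 ^ 3) ∧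
    (∀ (c d cb db : Nat.Primes → ℤ) (S Sb : AdamsFamily 4),
      (∀ p : Nat.Primes, S.ψ p (xx 4) = (c p : TP 4) * xx 4 ^ 2 + (d p : TP 4) * xx 4 ^ 3) →
      (∀ p : Nat.Primes, Sb.ψ p (xx 4) = (cb p : TP 4) * xx 4 ^ 2 + (db p : TP 4) * xx 4 ^ 3) →
      (AdamsIso S Sb ↔
        (∃ u : ℤ, (u = 1 ∨ u = -1) ∧ ∀ p : Nat.Primes, c p = u * cb p) ∧
        (∃ α : ℤ, ∀ p : Nat.Primes, db p = d p + 2 * c p * α))) := by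
  refine ⟨fun R h2 p => ?_, fun c d h => ?_, fun c d cb db S Sb hS hSb => ?_⟩
  · obtain ⟨c, d, h⟩ := TP.exists_ofCoeffs_of_mem_span_xx_sq (R.psi_xx_mem_span_xx_sq h2 p)
    exact ⟨c, d, h.trans (TP.ofCoeffs_zero_zero c d)⟩
  · simp only [← TP.ofCoeffs_zero_zero] at h ⊢
    exact AdamsFamily.exists_of_sub_pow_mem c d h
  · simp only [← TP.ofCoeffs_zero_zero] at hS hSb
    exact adamsIso_iff_of_psi_xx_eq hS hSb
end
end

section
/- Let n ∈ {3, 4, 5, 6}, and for each prime p let b_p be a nonzero integer with b_p ≡ 0 (mod p). Then there are only finitely many isomorphism classes of filtered λ-ring structures R on ℤ[x]/(xⁿ) with the property that ψ_p^R(x) ≡ b_p x (mod x²) for all primes p. -/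
open Polynomial

noncomputable section

/-!
Write `β = b₂`. Since `2 ∣ β ≠ 0`, `βᵏ ≠ β` for every `k ≥ 2`.

Rigidity: a structure is determined by `ψ₂` and the linear terms of all `ψ_p`. Indeed, if
`ψ_p(x)` and `ψ'_p(x)` agree modulo `xᵏ` with `k ≥ 2`, then `ψ₂`, which commutes with both, acts
on the `xᵏ`-coefficient of their difference as multiplication by `β` (through the commutation)
and by `βᵏ` (through the filtration), so that coefficient vanishes.

Normalisation: conjugating by the automorphism `x ↦ x + a xᵏ` adds `a (β - βᵏ)` to the
`xᵏ`-coefficient of `ψ₂(x)` and changes neither the lower coefficients nor the linear terms.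
Hence every class contains a structure whose `ψ₂(x) - βx` has its `xᵏ`-coefficient in
`[0, |β - βᵏ|]` for all `k`, and there are only finitely many such elements of `ℤ[x]/(xⁿ)`.
-/

section CommRing

variable {A : Type*} [CommRing A] {x : A}

theorem pow_succ_dvd_pow_sub_pow {a b : A} (ha : x ∣ a) (hb : x ∣ b) (hab : x ^ 2 ∣ a - b) :
    ∀ k : ℕ, x ^ (k + 1) ∣ a ^ k - b ^ k
  | 0 => by simp
  | k + 1 => by
    rw [show a ^ (k + 1) - b ^ (k + 1) = a * (a ^ k - b ^ k) + (a - b) * b ^ k by ring]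
    refine dvd_add ?_ ?_
    · rw [pow_succ']
      exact mul_dvd_mul ha (pow_succ_dvd_pow_sub_pow ha hb hab k)
    · rw [show k + 1 + 1 = 2 + k by ring, pow_add]
      exact mul_dvd_mul hab (pow_dvd_pow_of_dvd hb k)

theorem pow_dvd_map_of_dvd {φ : A →+* A} (hφ : x ∣ φ x) {k : ℕ} {a : A} (ha : x ^ k ∣ a) :
    x ^ k ∣ φ a := by
  obtain ⟨u, rfl⟩ := ha
  rw [map_mul, map_pow]
  exact dvd_mul_of_dvd_left (pow_dvd_pow_of_dvd hφ k) _

end CommRing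

section

variable {n k : ℕ}

local notation "x" => xx n

namespace TP

def mk (n : ℕ) : ℤ[X] →+* TP n := AdjoinRoot.mk (X ^ n)

theorem mk_X : mk n X = x := rfl

theorem surjective_mk : Function.Surjective (mk n) := Ideal.Quotient.mk_surjective

def rep (a : TP n) : ℤ[X] := AdjoinRoot.modByMonicHom (monic_X_pow n) a

theorem mk_rep (a : TP n) : mk n (rep a) = a := AdjoinRoot.mk_leftInverse (monic_X_pow n) a

theorem rep_mk (f : ℤ[X]) : rep (mk n f) = f %ₘ X ^ n := AdjoinRoot.modByMonicHom_mk _ f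

theorem rep_add (a b : TP n) : rep (a + b) = rep a + rep b := map_add _ a b

def coeff (n k : ℕ) : TP n →+ ℤ :=
  AddMonoidHom.mk' (fun a => (rep a).coeff k) fun a b => by
    rw [rep_add, coeff_add]

theorem coeff_mk (f : ℤ[X]) (hk : k < n) : coeff n k (mk n f) = f.coeff k := by
  rw [coeff, AddMonoidHom.mk'_apply, rep_mk, modByMonic_eq_sub_mul_div f (X ^ n), coeff_sub,
    coeff_X_pow_mul', if_neg (by omega), sub_zero]

theorem coeff_eq_zero_of_le (hk : n ≤ k) (a : TP n) : coeff n k a = 0 := by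
  rw [← mk_rep a, coeff, AddMonoidHom.mk'_apply, rep_mk]
  exact coeff_eq_zero_of_degree_lt <| (degree_modByMonic_lt _ (monic_X_pow n)).trans_le <| by
    rw [degree_X_pow]; exact_mod_cast hk

theorem coeff_intCast_mul (c : ℤ) (a : TP n) : coeff n k (c * a) = c * coeff n k a := by
  rw [← zsmul_eq_mul, map_zsmul, smul_eq_mul]

theorem ext_coeff {a b : TP n} (h : ∀ k, coeff n k a = coeff n k b) : a = b := by
  rw [← mk_rep a, ← mk_rep b]
  exact congrArg _ (Polynomial.ext h)

theorem xx_pow_eq_zero : x ^ n = 0 := by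
  rw [← mk_X, ← map_pow]
  exact Ideal.Quotient.eq_zero_iff_mem.2 (Ideal.subset_span rfl)

theorem coeff_xx_pow (j : ℕ) (hk : k < n) : coeff n j (x ^ k) = if j = k then 1 else 0 := by
  rcases lt_or_ge j n with hj | hj
  · rw [← mk_X, ← map_pow, coeff_mk _ hj, coeff_X_pow]
  · rw [coeff_eq_zero_of_le hj, if_neg (by omega)]

theorem xx_pow_dvd_iff {a : TP n} : x ^ k ∣ a ↔ ∀ j < k, coeff n j a = 0 := by
  constructor
  · rintro ⟨t, rfl⟩ j hj
    obtain ⟨T, rfl⟩ := surjective_mk t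
    rcases lt_or_ge j n with hjn | hjn
    · rw [← mk_X, ← map_pow, ← map_mul, coeff_mk _ hjn, coeff_X_pow_mul', if_neg (by omega)]
    · exact coeff_eq_zero_of_le hjn _
  · intro h
    obtain ⟨T, hT⟩ := X_pow_dvd_iff.2 h
    refine ⟨mk n T, ?_⟩
    rw [← mk_rep a]
    exact (congrArg (mk n) hT).trans (by rw [map_mul, map_pow, mk_X])

theorem eq_zero_of_xx_pow_dvd (hk : n ≤ k) {a : TP n} (ha : x ^ k ∣ a) : a = 0 := by
  rw [← Nat.add_sub_cancel' hk, pow_add, xx_pow_eq_zero, zero_mul, zero_dvd_iff] at ha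
  exact ha

theorem pow_succ_dvd_of_intCast_mul {a : TP n} (ha : x ^ k ∣ a) {c : ℤ} (hc : c ≠ 0)
    (hca : x ^ (k + 1) ∣ (c : TP n) * a) : x ^ (k + 1) ∣ a := by
  rw [xx_pow_dvd_iff] at ha hca ⊢
  intro j hj
  rcases (Nat.lt_succ_iff.1 hj).lt_or_eq with hj | rfl
  · exact ha j hj
  · simpa [coeff_intCast_mul, hc] using hca j hj

theorem coeff_eq_of_pow_succ_dvd {a b : TP n} {d : ℤ} (hk : k < n)
    (h : x ^ (k + 1) ∣ a - b - d * x ^ k) {j : ℕ} (hj : j ≤ k) :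
    coeff n j a = coeff n j b + if j = k then d else 0 := by
  have := xx_pow_dvd_iff.1 h j (Nat.lt_succ_of_le hj)
  rw [map_sub, map_sub, coeff_intCast_mul, coeff_xx_pow j hk] at this
  split_ifs at this ⊢ <;> linarith

theorem finite_setOf_coeff_mem_Icc (B : ℕ → ℤ) :
    {a : TP n | ∀ j, coeff n j a ∈ Set.Icc 0 (B j)}.Finite := by
  let f : TP n → (Fin n → ℤ) := fun a j => coeff n j a
  have hf : f.Injective := fun a b h => ext_coeff fun j => by
    rcases lt_or_ge j n with hj | hj
    · exact congrFun h ⟨j, hj⟩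
    · rw [coeff_eq_zero_of_le hj, coeff_eq_zero_of_le hj]
  refine ((Set.Finite.pi fun j : Fin n => Set.finite_Icc 0 (B j)).preimage hf.injOn).subset ?_
  exact fun a ha j _ => ha j

theorem map_sub_map_dvd {A : Type*} [CommRing A] (φ ψ : TP n →+* A) (a : TP n) :
    φ x - ψ x ∣ φ a - ψ a := by
  obtain ⟨f, rfl⟩ := surjective_mk a
  have h (χ : TP n →+* A) : χ (mk n f) = (f.map (Int.castRingHom A)).eval (χ x) := by
    rw [eval_map, ← coe_eval₂RingHom, ← RingHom.comp_apply]
    congr 1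
    exact Polynomial.ringHom_ext (fun _ => by simp) (by simp [mk_X])
  rw [h φ, h ψ]
  exact sub_dvd_eval_sub _ _ _

theorem ringHom_ext_s19 {A : Type*} [CommRing A] {φ ψ : TP n →+* A} (h : φ x = ψ x) : φ = ψ :=
  RingHom.ext fun a => sub_eq_zero.1 <| zero_dvd_iff.1 <| by
    simpa [h] using map_sub_map_dvd φ ψ a

theorem dvd_of_sq_dvd_sub_intCast_mul {a : TP n} {β : ℤ} (ha : x ^ 2 ∣ a - β * x) : x ∣ a := by
  simpa using dvd_add ((dvd_pow_self x two_ne_zero).trans ha) (dvd_mul_left x (β : TP n))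

theorem pow_succ_dvd_map_sub_map {φ ψ : TP n →+* TP n} (hφ : x ∣ φ x) (hψ : x ∣ ψ x)
    (hk : x ^ k ∣ φ x - ψ x) {a : TP n} (ha : x ^ 2 ∣ a) : x ^ (k + 1) ∣ φ a - ψ a := by
  obtain ⟨q, rfl⟩ := ha
  have h : φ (x ^ 2 * q) - ψ (x ^ 2 * q)
      = (φ x - ψ x) * (φ x + ψ x) * φ q + ψ x ^ 2 * (φ q - ψ q) := by
    simp only [map_mul, map_pow]; ring
  rw [h, pow_succ]
  refine dvd_add (dvd_mul_of_dvd_left (mul_dvd_mul hk (dvd_add hφ hψ)) _) ?_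
  rw [← pow_succ, pow_succ']
  exact mul_dvd_mul ((dvd_pow_self x two_ne_zero).trans (pow_dvd_pow_of_dvd hψ 2))
    (hk.trans (map_sub_map_dvd φ ψ q))

theorem pow_succ_dvd_map_sub_map_sub_mul {φ ψ : TP n →+* TP n} (hφ : x ∣ φ x) (hψ : x ∣ ψ x)
    (hk : x ^ k ∣ φ x - ψ x) {a : TP n} {β : ℤ} (ha : x ^ 2 ∣ a - β * x) :
    x ^ (k + 1) ∣ φ a - ψ a - β * (φ x - ψ x) := by
  convert pow_succ_dvd_map_sub_map hφ hψ hk ha using 1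
  simp only [map_sub, map_mul, map_intCast]
  ring

theorem pow_succ_dvd_map_sub_pow_mul {Φ : TP n →+* TP n} {β : ℤ} (hΦ : x ^ 2 ∣ Φ x - β * x)
    {a : TP n} (ha : x ^ k ∣ a) : x ^ (k + 1) ∣ Φ a - (β : TP n) ^ k * a := by
  obtain ⟨u, rfl⟩ := ha
  have hΦx : x ∣ Φ x := dvd_of_sq_dvd_sub_intCast_mul hΦ
  have hu : x ∣ Φ u - u :=
    (dvd_sub hΦx dvd_rfl).trans (map_sub_map_dvd Φ (RingHom.id _) u)
  have h : Φ (x ^ k * u) - (β : TP n) ^ k * (x ^ k * u)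
      = (Φ x ^ k - (β * x) ^ k) * Φ u + β ^ k * (x ^ k * (Φ u - u)) := by
    simp only [map_mul, map_pow]; ring
  rw [h]
  exact dvd_add (dvd_mul_of_dvd_left (pow_succ_dvd_pow_sub_pow hΦx (dvd_mul_left _ _) hΦ k) _)
    (dvd_mul_of_dvd_right (by rw [pow_succ]; exact mul_dvd_mul_left _ hu) _)

theorem bijective_of_sq_dvd_map_sub {φ : TP n →+* TP n} (hφ : x ^ 2 ∣ φ x - x) :
    Function.Bijective φ := by
  let N : Module.End ℤ (TP n) := φ.toIntAlgHom.toLinearMap - 1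
  have hN : ∀ k a, x ^ k ∣ (N ^ k) a := by
    intro k
    induction k with
    | zero => simp
    | succ k ih =>
      intro a
      rw [pow_succ' N, Module.End.mul_apply]
      simpa [N] using pow_succ_dvd_map_sub_pow_mul (β := 1) (by simpa using hφ) (ih a)
  have hNil : IsNilpotent N :=
    ⟨n, LinearMap.ext fun a => eq_zero_of_xx_pow_dvd le_rfl (hN n a)⟩
  simpa [N] using (Module.End.isUnit_iff _).1 hNil.isUnit_one_add

theorem exists_ringEquiv_apply_xx {t : TP n} (ht : x ^ 2 ∣ t - x) :
    ∃ σ : TP n ≃+* TP n, σ x = t := by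
  obtain ⟨u, rfl⟩ : x ∣ t := dvd_of_sq_dvd_sub_intCast_mul (β := 1) (by simpa using ht)
  let φ : TP n →+* TP n := AdjoinRoot.lift (Int.castRingHom _) (x * u) <| by
    rw [eval₂_X_pow, mul_pow, xx_pow_eq_zero, zero_mul]
  have hφ : φ x = x * u := AdjoinRoot.lift_root _
  exact ⟨RingEquiv.ofBijective φ (bijective_of_sq_dvd_map_sub (by rwa [hφ])), hφ⟩

theorem map_span_xx {σ : TP n ≃+* TP n} (hσ : x ^ 2 ∣ σ x - x) :
    (Ideal.span {x}).map σ.toRingHom = Ideal.span {x} := by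
  obtain ⟨q, hq⟩ := hσ
  have hu : IsUnit (1 + x * q) :=
    IsNilpotent.isUnit_one_add ⟨n, by rw [mul_pow, xx_pow_eq_zero, zero_mul]⟩
  have hσx : σ.toRingHom x = x * (1 + x * q) := by
    rw [RingEquiv.toRingHom_eq_coe, RingHom.coe_coe]; linear_combination hq
  rw [Ideal.map_span, Set.image_singleton, hσx, Ideal.span_singleton_mul_right_unit hu]

theorem eq_of_commute {β : ℤ} (hβ : 1 < β.natAbs) {Φ f g : TP n →+* TP n}
    (hΦ : x ^ 2 ∣ Φ x - β * x) (hf : Function.Commute Φ f) (hg : Function.Commute Φ g)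
    (hfx : x ∣ f x) (hgx : x ∣ g x) (hfg : x ^ 2 ∣ f x - g x) : f = g := by
  have key : ∀ k, 2 ≤ k → x ^ k ∣ f x - g x := by
    intro k hk
    induction k, hk using Nat.le_induction with
    | base => exact hfg
    | succ k hk ih =>
      -- `Φ` acts on `f x - g x ∈ (x ^ k)` both as `β ^ k` and, by commutation, as `β`.
      have hΦk := pow_succ_dvd_map_sub_pow_mul hΦ ih
      have hΦ1 := pow_succ_dvd_map_sub_map_sub_mul hfx hgx ih hΦ
      have hcomm : Φ (f x - g x) = f (Φ x) - g (Φ x) := by rw [map_sub, hf x, hg x]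
      have hne : β ^ k - β ≠ 0 :=
        sub_ne_zero.2 fun h => by
          have := Int.pow_right_injective hβ (h.trans (pow_one β).symm); omega
      refine pow_succ_dvd_of_intCast_mul ih hne ?_
      convert dvd_sub hΦ1 hΦk using 1
      rw [hcomm]; push_cast; ring
  exact ringHom_ext_s19 <| sub_eq_zero.1 <|
    eq_zero_of_xx_pow_dvd (le_max_left n 2) (key _ (le_max_right n 2))

theorem sq_dvd_sub_of_semiconj {σ ψ ψ' : TP n →+* TP n} (hσ : x ^ 2 ∣ σ x - x)
    (hψ' : x ∣ ψ' x) (h : Function.Semiconj σ ψ ψ') : x ^ 2 ∣ ψ' x - ψ x := by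
  have hσψ : x ^ 2 ∣ σ (ψ x) - ψ x := hσ.trans (map_sub_map_dvd σ (RingHom.id _) (ψ x))
  have hψ'σ : x ^ 2 ∣ ψ' (σ x - x) := pow_dvd_map_of_dvd hψ' hσ
  convert dvd_sub hσψ hψ'σ using 1
  rw [map_sub, ← h x]; ring

theorem pow_succ_dvd_sub_of_semiconj {σ ψ ψ' : TP n →+* TP n} {β : ℤ} (hσx : x ∣ σ x)
    (hσ : x ^ k ∣ σ x - x) (hψ : x ^ 2 ∣ ψ x - β * x) (hψ' : x ^ 2 ∣ ψ' x - β * x)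
    (h : Function.Semiconj σ ψ ψ') :
    x ^ (k + 1) ∣ ψ' x - ψ x - ((β - β ^ k : ℤ) : TP n) * (σ x - x) := by
  have hσψ := pow_succ_dvd_map_sub_map_sub_mul (ψ := RingHom.id _) hσx dvd_rfl hσ hψ
  have hψ'σ := pow_succ_dvd_map_sub_pow_mul hψ' hσ
  convert dvd_sub hσψ hψ'σ using 1
  rw [RingHom.id_apply, RingHom.id_apply, map_sub, ← h x]; push_cast; ring

end TP

theorem AdamsIso.refl (R : AdamsFamily n) : AdamsIso R R :=
  ⟨RingEquiv.refl _, Ideal.map_id _, fun _ => rfl⟩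

theorem AdamsIso.trans {R S T : AdamsFamily n} (hRS : AdamsIso R S) (hST : AdamsIso S T) :
    AdamsIso R T := by
  obtain ⟨σ, hσ, hσψ⟩ := hRS
  obtain ⟨τ, hτ, hτψ⟩ := hST
  have h : (σ.trans τ).toRingHom = τ.toRingHom.comp σ.toRingHom := rfl
  refine ⟨σ.trans τ, by rw [h, ← Ideal.map_map, hσ, hτ], fun p => ?_⟩
  rw [h, RingHom.comp_assoc, hσψ p, ← RingHom.comp_assoc, hτψ p, RingHom.comp_assoc]

namespace AdamsFamily

theorem dvd_ψ_xx (R : AdamsFamily n) (p : Nat.Primes) : x ∣ R.ψ p x :=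
  Ideal.mem_span_singleton.1 (R.maps_ideal p x (Ideal.mem_span_singleton_self x))

theorem ext {R S : AdamsFamily n} (h : ∀ p, R.ψ p = S.ψ p) : R = S := by
  cases R; cases S
  simp only [mk.injEq]
  exact funext h

def conj (R : AdamsFamily n) (σ : TP n ≃+* TP n)
    (hσ : (Ideal.span {x}).map σ.toRingHom = Ideal.span {x}) : AdamsFamily n where
  ψ p := σ.toRingHom.comp ((R.ψ p).comp σ.symm.toRingHom)
  maps_ideal p a ha := by
    have hσ' := hσ
    rw [RingEquiv.toRingHom_eq_coe, Ideal.map_comap_of_equiv] at hσ'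
    rw [← hσ'] at ha
    rw [← hσ]
    exact Ideal.mem_map_of_mem _ (R.maps_ideal p _ ha)
  comm p q := RingHom.ext fun a => by
    simpa using RingHom.congr_fun (R.comm p q) (σ.symm a)
  frob p a := by
    obtain ⟨u, hu⟩ := Ideal.mem_span_singleton.1 (R.frob p (σ.symm a))
    refine Ideal.mem_span_singleton.2 ⟨σ u, ?_⟩
    simpa using congrArg σ hu

theorem adamsIso_conj (R : AdamsFamily n) (σ : TP n ≃+* TP n)
    (hσ : (Ideal.span {x}).map σ.toRingHom = Ideal.span {x}) : AdamsIso R (R.conj σ hσ) :=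
  ⟨σ, hσ, fun p => RingHom.ext fun a => by simp [conj]⟩

theorem semiconj_conj (R : AdamsFamily n) (σ : TP n ≃+* TP n)
    (hσ : (Ideal.span {x}).map σ.toRingHom = Ideal.span {x}) (p : Nat.Primes) :
    Function.Semiconj σ (R.ψ p) ((R.conj σ hσ).ψ p) := fun a => by simp [conj]

theorem eq_of_ψ_eq {β : ℤ} (hβ : 1 < β.natAbs) {R S : AdamsFamily n} {q : Nat.Primes}
    (hq : R.ψ q = S.ψ q) (hβq : x ^ 2 ∣ R.ψ q x - β * x)
    (h : ∀ p, x ^ 2 ∣ R.ψ p x - S.ψ p x) : R = S :=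
  ext fun p => TP.eq_of_commute hβ hβq (fun a => RingHom.congr_fun (R.comm q p) a)
    (hq ▸ fun a => RingHom.congr_fun (S.comm q p) a) (R.dvd_ψ_xx p) (S.dvd_ψ_xx p) (h p)

theorem exists_adamsIso_shift (R : AdamsFamily n) {q : Nat.Primes} {β : ℤ}
    (hq : x ^ 2 ∣ R.ψ q x - β * x) {k : ℕ} (hk : 2 ≤ k) (a : ℤ) :
    ∃ S : AdamsFamily n, AdamsIso R S ∧ (∀ p, x ^ 2 ∣ S.ψ p x - R.ψ p x) ∧
      x ^ (k + 1) ∣ S.ψ q x - R.ψ q x - ((a * (β - β ^ k) : ℤ) : TP n) * x ^ k := by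
  have hk2 : x ^ 2 ∣ (a : TP n) * x ^ k := dvd_mul_of_dvd_right (pow_dvd_pow x hk) _
  obtain ⟨σ, hσ⟩ := TP.exists_ringEquiv_apply_xx (t := x + (a : TP n) * x ^ k) (by simpa using hk2)
  have hσx : σ x - x = a * x ^ k := by rw [hσ]; ring
  have hσ2 : x ^ 2 ∣ σ x - x := hσx ▸ hk2
  let S := R.conj σ (TP.map_span_xx hσ2)
  have hlin (p : Nat.Primes) : x ^ 2 ∣ S.ψ p x - R.ψ p x :=
    TP.sq_dvd_sub_of_semiconj (σ := σ.toRingHom) hσ2 (S.dvd_ψ_xx p) (R.semiconj_conj σ _ p)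
  refine ⟨S, R.adamsIso_conj σ _, hlin, ?_⟩
  have hσxx : x ∣ σ x := hσ ▸ dvd_add dvd_rfl (dvd_mul_of_dvd_right (dvd_pow_self x (by omega)) _)
  have := TP.pow_succ_dvd_sub_of_semiconj (σ := σ.toRingHom) hσxx (hσx ▸ dvd_mul_left _ _) hq
    (by simpa using dvd_add (hlin q) hq) (R.semiconj_conj σ _ q)
  rw [RingEquiv.toRingHom_eq_coe, RingHom.coe_coe, hσx] at this
  convert this using 2
  push_cast; ring

theorem exists_adamsIso_coeff_mem_Icc (R : AdamsFamily n) {q : Nat.Primes} {β : ℤ}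
    (hβ : 1 < β.natAbs) (hq : x ^ 2 ∣ R.ψ q x - β * x) (k : ℕ) :
    ∃ S : AdamsFamily n, AdamsIso R S ∧ (∀ p, x ^ 2 ∣ S.ψ p x - R.ψ p x) ∧
      (∀ j < k, TP.coeff n j (S.ψ q x - β * x) = TP.coeff n j (R.ψ q x - β * x)) ∧
      TP.coeff n k (S.ψ q x - β * x) ∈ Set.Icc 0 |β - β ^ k| := by
  set c := TP.coeff n k (R.ψ q x - β * x)
  by_cases hk : 2 ≤ k ∧ k < n
  · have hm : β - β ^ k ≠ 0 := fun h => by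
      have := Int.pow_right_injective hβ ((pow_one β).trans (sub_eq_zero.1 h)); omega
    obtain ⟨S, hRS, hlin, hS⟩ := R.exists_adamsIso_shift hq hk.1 (-(c / (β - β ^ k)))
    have hS' : x ^ (k + 1) ∣ (S.ψ q x - β * x) - (R.ψ q x - β * x)
        - ((-(c / (β - β ^ k)) * (β - β ^ k) : ℤ) : TP n) * x ^ k := by
      convert hS using 2; ring
    have hcoeff (j : ℕ) (hj : j ≤ k) := TP.coeff_eq_of_pow_succ_dvd hk.2 hS' hj
    refine ⟨S, hRS, hlin, fun j hj => by simpa [hj.ne] using hcoeff j hj.le, ?_⟩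
    rw [hcoeff k le_rfl, if_pos rfl, show c + -(c / (β - β ^ k)) * (β - β ^ k) = c % (β - β ^ k)
      by rw [Int.emod_def]; ring]
    exact ⟨Int.emod_nonneg c hm, (Int.emod_lt_abs c hm).le⟩
  · refine ⟨R, .refl R, by simp, fun _ _ => rfl, ?_⟩
    rw [not_and_or, not_le, not_lt] at hk
    rcases hk with hk | hk
    · rw [TP.xx_pow_dvd_iff.1 hq k hk]; exact ⟨le_rfl, abs_nonneg _⟩
    · rw [TP.coeff_eq_zero_of_le hk]; exact ⟨le_rfl, abs_nonneg _⟩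

theorem exists_adamsIso_reduced (R : AdamsFamily n) {q : Nat.Primes} {β : ℤ}
    (hβ : 1 < β.natAbs) (hq : x ^ 2 ∣ R.ψ q x - β * x) :
    ∃ S : AdamsFamily n, AdamsIso R S ∧ (∀ p, x ^ 2 ∣ S.ψ p x - R.ψ p x) ∧
      ∀ j, TP.coeff n j (S.ψ q x - β * x) ∈ Set.Icc 0 |β - β ^ j| := by
  suffices h : ∀ k, ∃ S : AdamsFamily n, AdamsIso R S ∧ (∀ p, x ^ 2 ∣ S.ψ p x - R.ψ p x) ∧
      ∀ j < k, TP.coeff n j (S.ψ q x - β * x) ∈ Set.Icc 0 |β - β ^ j| by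
    obtain ⟨S, hRS, hlin, hS⟩ := h n
    refine ⟨S, hRS, hlin, fun j => ?_⟩
    rcases lt_or_ge j n with hj | hj
    · exact hS j hj
    · rw [TP.coeff_eq_zero_of_le hj]; exact ⟨le_rfl, abs_nonneg _⟩
  intro k
  induction k with
  | zero => exact ⟨R, .refl R, by simp, by simp⟩
  | succ k ih =>
    obtain ⟨S, hRS, hlin, hS⟩ := ih
    obtain ⟨T, hST, hlinT, hlow, hk⟩ :=
      S.exists_adamsIso_coeff_mem_Icc hβ (by simpa using dvd_add (hlin q) hq) k
    refine ⟨T, hRS.trans hST, fun p => by simpa using dvd_add (hlinT p) (hlin p), fun j hj => ?_⟩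
    rcases (Nat.lt_succ_iff.1 hj).lt_or_eq with hj | rfl
    · exact hlow j hj ▸ hS j hj
    · exact hk

end AdamsFamily

end

theorem stmt19_general (n : ℕ) (b : Nat.Primes → ℤ)
    (hb0 : ∀ p : Nat.Primes, b p ≠ 0)
    (hbd : ∀ p : Nat.Primes, ((p : ℕ) : ℤ) ∣ b p) :
    Finite (Quot (fun (R S : {R : AdamsFamily n //
        ∀ p : Nat.Primes,
          R.ψ p (xx n) - (b p : TP n) * xx n ∈ Ideal.span {xx n ^ 2}}) =>
      AdamsIso R.1 S.1)) := by
  set β := b P2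
  have hβ : 1 < β.natAbs :=
    Nat.le_of_dvd (Int.natAbs_pos.2 (hb0 P2)) (Int.natAbs_dvd_natAbs.2 (hbd P2))
  have hdvd {R : AdamsFamily n} {p : Nat.Primes} (h : R.ψ p (xx n) - (b p : TP n) * xx n ∈
      Ideal.span {xx n ^ 2}) := Ideal.mem_span_singleton.1 h
  set s := {a : TP n | ∀ j, TP.coeff n j a ∈ Set.Icc 0 |β - β ^ j|}
  let C := {R : {R : AdamsFamily n // ∀ p : Nat.Primes,
      R.ψ p (xx n) - (b p : TP n) * xx n ∈ Ideal.span {xx n ^ 2}} // R.1.ψ P2 (xx n) - β * xx n ∈ s}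
  have : Finite C := by
    have := (TP.finite_setOf_coeff_mem_Icc (n := n) fun j => |β - β ^ j|).to_subtype
    refine Finite.of_injective (fun R : C => (⟨_, R.2⟩ : s)) fun R S h => ?_
    have hψ : R.1.1.ψ P2 = S.1.1.ψ P2 := TP.ringHom_ext_s19 (sub_left_inj.1 (congrArg Subtype.val h))
    refine Subtype.ext (Subtype.ext (AdamsFamily.eq_of_ψ_eq hβ hψ (hdvd (R.1.2 P2)) ?_))
    exact fun p => by simpa using dvd_sub (hdvd (R.1.2 p)) (hdvd (S.1.2 p))
  refine Finite.of_surjective (fun R : C => Quot.mk _ R.1) ?_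
  rintro ⟨R, hR⟩
  obtain ⟨S, hRS, hlin, hS⟩ := R.exists_adamsIso_reduced hβ (hdvd (hR P2))
  refine ⟨⟨⟨S, fun p => Ideal.mem_span_singleton.2 ?_⟩, hS⟩, Eq.symm <| Quot.sound hRS⟩
  simpa using dvd_add (hlin p) (hdvd (hR p))

theorem stmt19 (n : ℕ) (hn : n = 3 ∨ n = 4 ∨ n = 5 ∨ n = 6) (b : Nat.Primes → ℤ)
    (hb0 : ∀ p : Nat.Primes, b p ≠ 0)
    (hbd : ∀ p : Nat.Primes, ((p : ℕ) : ℤ) ∣ b p) :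
    Finite (Quot (fun (R S : {R : AdamsFamily n //
        ∀ p : Nat.Primes,
          R.ψ p (xx n) - (b p : TP n) * xx n ∈ Ideal.span {xx n ^ 2}}) =>
      AdamsIso R.1 S.1)) :=
  stmt19_general n b hb0 hbd
end
end
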